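/- Let z be a random vector with positive definite A_zz = E[zz'], let p, Δ₂ be square-integrable random variables, and suppose p = Δ₁ + ω where E[zω] = 0 (model 1 is true). Then E[z(p − Δ₂)] ≠ 0 if and only if E[(Δ̃₁ − Δ̃₂)²] ≠ 0, where Δ̃ₘ is the linear projection of Δₘ onto z. -/

import Mathlib

open MeasureTheory Matrix

/-! Under model 1 the instrument moments of `p - Δ₂` are the moment gap
`c = E[zΔ₁] - E[zΔ₂]`, because `E[zω] = 0`. The predicted markups differ by the linear
function `z ⬝ A_zz⁻¹ c`, whose second moment is the quadratic form `c ⬝ A_zz⁻¹ c`; since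
`A_zz⁻¹` is positive definite, this vanishes exactly when `c = 0`. -/

theorem Matrix.PosDef.dotProduct_mulVec_self_eq_zero_iff {n : Type*} [Fintype n]
    {M : Matrix n n ℝ} (hM : M.PosDef) {x : n → ℝ} :
    x ⬝ᵥ (M *ᵥ x) = 0 ↔ x = 0 := by
  refine ⟨fun h => by_contra fun hx => ?_, fun h => by simp [h]⟩
  have hpos : 0 < x ⬝ᵥ (M *ᵥ x) := by simpa using hM.dotProduct_mulVec_pos hx
  exact hpos.ne' h

theorem integral_dotProduct_sq {Ω ι : Type*} [MeasurableSpace Ω] [Fintype ι] {μ : Measure Ω}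
    {z : Ω → ι → ℝ} (hz : ∀ i, MemLp (fun ω => z ω i) 2 μ) (b : ι → ℝ) :
    ∫ ω, (z ω ⬝ᵥ b) ^ 2 ∂μ = b ⬝ᵥ ((of fun i j => ∫ ω, z ω i * z ω j ∂μ) *ᵥ b) := by
  have hzz : ∀ i j, Integrable (fun ω => z ω i * z ω j) μ := fun i j =>
    (hz i).integrable_mul (hz j)
  have hexpand : ∀ ω, (z ω ⬝ᵥ b) ^ 2 = ∑ i, b i * ∑ j, z ω i * z ω j * b j := by
    intro ω
    rw [dotProduct, sq, Finset.sum_mul_sum]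
    simp only [Finset.mul_sum]
    refine Finset.sum_congr rfl fun i _ => Finset.sum_congr rfl fun j _ => ?_
    ring
  simp_rw [hexpand]
  simp only [dotProduct, mulVec, of_apply]
  rw [integral_finsetSum _ fun i _ =>
    (integrable_finsetSum _ fun j _ => (hzz i j).mul_const (b j)).const_mul (b i)]
  refine Finset.sum_congr rfl fun i _ => ?_
  rw [integral_const_mul, integral_finsetSum _ fun j _ => (hzz i j).mul_const (b j)]
  simp only [integral_mul_const]

theorem integral_mul_add_of_integral_mul_eq_zero {Ω : Type*} [MeasurableSpace Ω]
    {μ : Measure Ω} {f g e : Ω → ℝ} (hf : MemLp f 2 μ) (hg : MemLp g 2 μ) (he : MemLp e 2 μ)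
    (hfe : ∫ ω, f ω * e ω ∂μ = 0) :
    ∫ ω, f ω * (g ω + e ω) ∂μ = ∫ ω, f ω * g ω ∂μ := by
  have hfg_int : Integrable (fun ω => f ω * g ω) μ := hf.integrable_mul hg
  have hfe_int : Integrable (fun ω => f ω * e ω) μ := hf.integrable_mul he
  simp_rw [mul_add]
  rw [integral_add hfg_int hfe_int, hfe, add_zero]

theorem stmt_1_general {Ω : Type*} [MeasurableSpace Ω] (μ : Measure Ω)
    {d : ℕ} (z : Ω → Fin d → ℝ) (p Δ₁ Δ₂ ω₀ : Ω → ℝ)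
    (hz : ∀ i, MemLp (fun ω => z ω i) 2 μ)
    (hp : MemLp p 2 μ) (hΔ₁ : MemLp Δ₁ 2 μ) (hΔ₂ : MemLp Δ₂ 2 μ)
    (hmodel : ∀ ω, p ω = Δ₁ ω + ω₀ ω)
    (hexog : ∀ i, ∫ ω, z ω i * ω₀ ω ∂μ = 0)
    (Azz : Matrix (Fin d) (Fin d) ℝ)
    (hAzz : Azz = Matrix.of fun i j => ∫ ω, z ω i * z ω j ∂μ)
    (hpos : Azz.PosDef)
    (Δt₁ Δt₂ : Ω → ℝ)
    (hΔt₁ : Δt₁ = fun ω => z ω ⬝ᵥ (Azz⁻¹ *ᵥ fun i => ∫ ω', z ω' i * Δ₁ ω' ∂μ))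
    (hΔt₂ : Δt₂ = fun ω => z ω ⬝ᵥ (Azz⁻¹ *ᵥ fun i => ∫ ω', z ω' i * Δ₂ ω' ∂μ)) :
    (¬ ∀ i, ∫ ω, z ω i * (p ω - Δ₂ ω) ∂μ = 0) ↔
      ∫ ω, (Δt₁ ω - Δt₂ ω) ^ 2 ∂μ ≠ 0 := by
  set c : Fin d → ℝ := fun i => ∫ ω, z ω i * Δ₁ ω ∂μ - ∫ ω, z ω i * Δ₂ ω ∂μ
  have hω₀ : MemLp ω₀ 2 μ := by
    have hresid : ω₀ = p - Δ₁ := by funext ω; simp [hmodel]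
    exact hresid ▸ hp.sub hΔ₁
  have hmoment : ∀ i, ∫ ω, z ω i * (p ω - Δ₂ ω) ∂μ = c i := by
    intro i
    have hsplit : ∀ ω, p ω - Δ₂ ω = (Δ₁ ω - Δ₂ ω) + ω₀ ω := fun ω => by rw [hmodel]; ring
    simp_rw [hsplit]
    rw [integral_mul_add_of_integral_mul_eq_zero (g := fun ω => Δ₁ ω - Δ₂ ω) (hz i)
      (hΔ₁.sub hΔ₂) hω₀ (hexog i)]
    simp_rw [mul_sub]
    exact integral_sub ((hz i).integrable_mul hΔ₁) ((hz i).integrable_mul hΔ₂)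
  have hgap : ∀ ω, Δt₁ ω - Δt₂ ω = z ω ⬝ᵥ (Azz⁻¹ *ᵥ c) := by
    intro ω
    rw [hΔt₁, hΔt₂, ← dotProduct_sub, ← mulVec_sub]
    rfl
  have hquad : ∫ ω, (Δt₁ ω - Δt₂ ω) ^ 2 ∂μ = c ⬝ᵥ (Azz⁻¹ *ᵥ c) := by
    simp_rw [hgap]
    rw [integral_dotProduct_sq hz, ← hAzz, mulVec_mulVec,
      mul_nonsing_inv _ ((isUnit_iff_isUnit_det _).1 hpos.isUnit), one_mulVec, dotProduct_comm]
  rw [hquad, Ne, hpos.inv.dotProduct_mulVec_self_eq_zero_iff, funext_iff]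
  simp only [hmoment, Pi.zero_apply]

/-- If `p = Δ₁ + ω` with `E[zω] = 0` (model 1 true), then model 2 is
falsified, i.e. `E[z(p − Δ₂)] ≠ 0`, iff `E[(Δ̃₁ − Δ̃₂)²] ≠ 0`. -/
theorem stmt_1 {Ω : Type*} [MeasurableSpace Ω] (μ : Measure Ω) [IsProbabilityMeasure μ]
    {d : ℕ} (z : Ω → Fin d → ℝ) (p Δ₁ Δ₂ ω₀ : Ω → ℝ)
    (hz : ∀ i, MemLp (fun ω => z ω i) 2 μ)
    (hp : MemLp p 2 μ) (hΔ₁ : MemLp Δ₁ 2 μ) (hΔ₂ : MemLp Δ₂ 2 μ)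
    (hmodel : ∀ ω, p ω = Δ₁ ω + ω₀ ω)
    (hexog : ∀ i, ∫ ω, z ω i * ω₀ ω ∂μ = 0)
    (Azz : Matrix (Fin d) (Fin d) ℝ)
    (hAzz : Azz = Matrix.of fun i j => ∫ ω, z ω i * z ω j ∂μ)
    (hpos : Azz.PosDef)
    (Δt₁ Δt₂ : Ω → ℝ)
    (hΔt₁ : Δt₁ = fun ω => z ω ⬝ᵥ (Azz⁻¹ *ᵥ fun i => ∫ ω', z ω' i * Δ₁ ω' ∂μ))
    (hΔt₂ : Δt₂ = fun ω => z ω ⬝ᵥ (Azz⁻¹ *ᵥ fun i => ∫ ω', z ω' i * Δ₂ ω' ∂μ)) :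
    (¬ ∀ i, ∫ ω, z ω i * (p ω - Δ₂ ω) ∂μ = 0) ↔
      ∫ ω, (Δt₁ ω - Δt₂ ω) ^ 2 ∂μ ≠ 0 :=
  stmt_1_general μ z p Δ₁ Δ₂ ω₀ hz hp hΔ₁ hΔ₂ hmodel hexog Azz hAzz hpos Δt₁ Δt₂ hΔt₁ hΔt₂
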